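/- arXiv:1803.10359 — 6 statements merged into one kernel-verified Lean document; each statement's English description precedes it below -/
import Mathlib

section
/- Let p(z) = z^m - a_1 z^{m-1} - a_2 z^{m-2} - ... - a_{m-1} z - a_m be a polynomial with nonnegative real coefficients a_1,...,a_m. Then every (complex) root of p has modulus strictly less than 1 if and only if p(1) > 0. -/
/-!
If `‖z‖ ≥ 1` and `a ≥ 0`, then `‖∑ aᵢ z^(m-1-i)‖ ≤ (∑ aᵢ) ‖z‖^(m-1)`, which is `< ‖z‖^m` as soon as
`∑ aᵢ < 1`; so no such `z` is a root. Conversely, if `∑ aᵢ ≥ 1` then `x ↦ x^m - ∑ aᵢ x^(m-1-i)` is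
`≤ 0` at `x = 1` and `≥ 0` at `x = ∑ aᵢ`, and the intermediate value theorem gives a real root `≥ 1`.
-/

open Finset

theorem sum_mul_pow_le_sum_mul_pow {R : Type*} [Semiring R] [PartialOrder R] [IsOrderedRing R]
    {m : ℕ} {a : Fin m → R} (ha : ∀ i, 0 ≤ a i) {x : R} (hx : 1 ≤ x) :
    ∑ i : Fin m, a i * x ^ (m - 1 - (i : ℕ)) ≤ (∑ i : Fin m, a i) * x ^ (m - 1) := by
  rw [sum_mul]
  exact sum_le_sum fun i _ ↦
    mul_le_mul_of_nonneg_left (pow_le_pow_right₀ hx (Nat.sub_le _ _)) (ha i)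

theorem norm_lt_one_of_pow_eq_sum {𝕜 : Type*} [RCLike 𝕜] {m : ℕ} {a : Fin m → ℝ}
    (ha : ∀ i, 0 ≤ a i) (hsum : ∑ i : Fin m, a i < 1) {z : 𝕜}
    (hz : z ^ m = ∑ i : Fin m, (a i : 𝕜) * z ^ (m - 1 - (i : ℕ))) : ‖z‖ < 1 := by
  by_contra! hz1
  have hnorm : ‖z‖ ^ m ≤ ∑ i : Fin m, a i * ‖z‖ ^ (m - 1 - (i : ℕ)) := by
    rw [← norm_pow, hz]
    refine (norm_sum_le _ _).trans (sum_le_sum fun i _ ↦ ?_)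
    rw [norm_mul, norm_pow, RCLike.norm_ofReal, abs_of_nonneg (ha i)]
  have hpos : 0 < ‖z‖ ^ (m - 1) := pow_pos (by linarith) _
  refine lt_irrefl (‖z‖ ^ m) ?_
  calc ‖z‖ ^ m ≤ (∑ i : Fin m, a i) * ‖z‖ ^ (m - 1) :=
        hnorm.trans (sum_mul_pow_le_sum_mul_pow ha hz1)
    _ < ‖z‖ ^ (m - 1) := mul_lt_of_lt_one_left hpos hsum
    _ ≤ ‖z‖ ^ m := pow_le_pow_right₀ hz1 (Nat.sub_le _ _)

theorem exists_one_le_pow_eq_sum {m : ℕ} {a : Fin m → ℝ} (ha : ∀ i, 0 ≤ a i)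
    (hsum : 1 ≤ ∑ i : Fin m, a i) :
    ∃ x : ℝ, 1 ≤ x ∧ x ^ m = ∑ i : Fin m, a i * x ^ (m - 1 - (i : ℕ)) := by
  set S := ∑ i : Fin m, a i
  have hm : m ≠ 0 := by
    rintro rfl
    norm_num [S] at hsum
  let f : ℝ → ℝ := fun x ↦ x ^ m - ∑ i : Fin m, a i * x ^ (m - 1 - (i : ℕ))
  have hf1 : f 1 ≤ 0 := by simpa [f] using hsum
  have hfS : 0 ≤ f S := by
    have := sum_mul_pow_le_sum_mul_pow ha hsum
    rw [← pow_succ', Nat.sub_add_cancel (Nat.one_le_iff_ne_zero.2 hm)] at this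
    simpa [f] using this
  obtain ⟨x, hx, hfx⟩ := intermediate_value_Icc hsum (by fun_prop) ⟨hf1, hfS⟩
  exact ⟨x, hx.1, sub_eq_zero.1 hfx⟩

theorem roots_in_unit_disc_iff_general (m : ℕ) (a : Fin m → ℝ)
    (ha : ∀ i, 0 ≤ a i)
    (p : ℂ → ℂ)
    (hp : ∀ z : ℂ, p z = z ^ m - ∑ i : Fin m, (a i : ℂ) * z ^ (m - 1 - (i : ℕ))) :
    (∀ z : ℂ, p z = 0 → ‖z‖ < 1) ↔ 0 < 1 - ∑ i : Fin m, a i := by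
  constructor
  · intro hroots
    by_contra! hsum
    obtain ⟨x, hx1, hx⟩ := exists_one_le_pow_eq_sum ha (by linarith)
    have hroot : p x = 0 := by
      rw [hp, sub_eq_zero]
      exact_mod_cast hx
    have := hroots x hroot
    rw [Complex.norm_real, Real.norm_of_nonneg (by linarith)] at this
    linarith
  · intro hsum z hz
    rw [hp, sub_eq_zero] at hz
    exact norm_lt_one_of_pow_eq_sum ha (by linarith) hz

/-- A monic polynomial `p(z) = z^m - ∑_{i=1}^m a_i z^{m-i}` with
nonnegative real coefficients `a_i` has all complex roots of modulus `< 1`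
iff `p(1) = 1 - ∑ a_i > 0`. -/
theorem roots_in_unit_disc_iff (m : ℕ) (hm : 0 < m) (a : Fin m → ℝ)
    (ha : ∀ i, 0 ≤ a i)
    (p : ℂ → ℂ)
    (hp : ∀ z : ℂ, p z = z ^ m - ∑ i : Fin m, (a i : ℂ) * z ^ (m - 1 - (i : ℕ))) :
    (∀ z : ℂ, p z = 0 → ‖z‖ < 1) ↔ 0 < 1 - ∑ i : Fin m, a i :=
  roots_in_unit_disc_iff_general m a ha p hp
end

section
/- Let {u^k}, {v_1^k},...,{v_m^k} be nonnegative real sequences, λ_0,...,λ_m ∈ (0,1), and R_0,...,R_m ≥ 0 such that u^{k+1} ≤ R_0 λ_0^k + Σ_{i=1}^m R_i Σ_{l=0}^k λ_i^{k-l} v_i^l for all k ≥ 0. Then for any λ ∈ (max_i λ_i, 1) and any N ∈ ℕ, the weighted sup-norm |u|^{λ,N} := max_{0≤k≤N} u^k / λ^k satisfies |u|^{λ,N} ≤ u^0 + R_0/λ + Σ_{i=1}^m (R_i / (λ - λ_i)) |v_i|^{λ,N}. -/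
open Finset

/-- the λ-weighted max norm over the first `N+1` terms of a sequence. -/
noncomputable def wnorm (w : ℕ → ℝ) (lam : ℝ) (N : ℕ) : ℝ :=
  (Finset.range (N + 1)).sup' (by simp) (fun k => w k / lam ^ k)

theorem wnorm_bound_of_geometric_convolution (m : ℕ) (u : ℕ → ℝ) (v : Fin m → ℕ → ℝ)
    (hu : ∀ k, 0 ≤ u k) (hv : ∀ i k, 0 ≤ v i k)
    (lam0 : ℝ) (lamv : Fin m → ℝ) (R0 : ℝ) (R : Fin m → ℝ)
    (hlam0 : 0 < lam0 ∧ lam0 < 1) (hlamv : ∀ i, 0 < lamv i ∧ lamv i < 1)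
    (hR0 : 0 ≤ R0) (hR : ∀ i, 0 ≤ R i)
    (hrec : ∀ k : ℕ, u (k + 1) ≤ R0 * lam0 ^ k +
      ∑ i : Fin m, R i * ∑ l ∈ Finset.range (k + 1), lamv i ^ (k - l) * v i l)
    (lam : ℝ) (hlt : lam0 < lam) (hlts : ∀ i, lamv i < lam) (hlam1 : lam < 1)
    (N : ℕ) :
    wnorm u lam N ≤ u 0 + R0 / lam + ∑ i : Fin m, (R i / (lam - lamv i)) * wnorm (v i) lam N := by
  have hlam : 0 < lam := lt_trans hlam0.1 hlt
  set W : Fin m → ℝ := fun i => wnorm (v i) lam N with hWdef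
  have hW : ∀ i, 0 ≤ W i := by
    intro i
    have h0 : v i 0 / lam ^ 0 ≤ wnorm (v i) lam N :=
      Finset.le_sup' (fun k => v i k / lam ^ k) (by simp : (0:ℕ) ∈ Finset.range (N+1))
    have := hv i 0
    simp only [pow_zero, div_one] at h0
    linarith
  have hWle : ∀ i l, l ≤ N → v i l ≤ W i * lam ^ l := by
    intro i l hl
    have h := Finset.le_sup' (fun k => v i k / lam ^ k)
      (Finset.mem_range.mpr (Nat.lt_succ_of_le hl))
    have hp : (0:ℝ) < lam ^ l := pow_pos hlam l
    calc v i l = v i l / lam ^ l * lam ^ l := by field_simp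
      _ ≤ W i * lam ^ l := mul_le_mul_of_nonneg_right h hp.le
  have hsum_nonneg : 0 ≤ ∑ i : Fin m, R i / (lam - lamv i) * W i :=
    Finset.sum_nonneg fun i _ =>
      mul_nonneg (div_nonneg (hR i) (sub_nonneg.2 (hlts i).le)) (hW i)
  have hR0l : 0 ≤ R0 / lam := div_nonneg hR0 hlam.le
  apply Finset.sup'_le
  intro k hk
  match k with
  | 0 =>
    simp only [pow_zero, div_one]
    linarith [hu 0]
  | (k+1) =>
    have hkN : k + 1 ≤ N := Nat.lt_succ_iff.mp (Finset.mem_range.mp hk)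
    have hpow : (0:ℝ) < lam ^ (k+1) := pow_pos hlam (k+1)
    rw [div_le_iff₀ hpow]
    refine (hrec k).trans ?_
    have t1 : R0 * lam0 ^ k ≤ R0 / lam * lam ^ (k+1) := by
      have h1 : lam0 ^ k ≤ lam ^ k := pow_le_pow_left₀ hlam0.1.le hlt.le k
      have : R0 / lam * lam ^ (k+1) = R0 * lam ^ k := by
        rw [pow_succ]; field_simp
      rw [this]
      exact mul_le_mul_of_nonneg_left h1 hR0
    have t2 : ∀ i : Fin m,
        R i * ∑ l ∈ Finset.range (k + 1), lamv i ^ (k - l) * v i l ≤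
          R i / (lam - lamv i) * W i * lam ^ (k+1) := by
      intro i
      have hd : (0:ℝ) < lam - lamv i := sub_pos.2 (hlts i)
      have hgeom : (∑ l ∈ Finset.range (k+1), lam ^ l * lamv i ^ (k - l)) * (lam - lamv i)
          = lam ^ (k+1) - lamv i ^ (k+1) := by
        have h := geom_sum₂_mul lam (lamv i) (k+1)
        have he : ∀ l, k + 1 - 1 - l = k - l := fun l => by omega
        simpa [he] using h
      have hsum : (∑ l ∈ Finset.range (k + 1), lamv i ^ (k - l) * v i l) ≤
          W i * ∑ l ∈ Finset.range (k+1), lam ^ l * lamv i ^ (k - l) := by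
        rw [Finset.mul_sum]
        apply Finset.sum_le_sum
        intro l hl
        have hlN : l ≤ N := by
          have := Finset.mem_range.mp hl; omega
        have hb := hWle i l hlN
        calc lamv i ^ (k - l) * v i l ≤ lamv i ^ (k - l) * (W i * lam ^ l) :=
              mul_le_mul_of_nonneg_left hb (pow_nonneg (hlamv i).1.le _)
          _ = W i * (lam ^ l * lamv i ^ (k - l)) := by ring
      have hS : (∑ l ∈ Finset.range (k + 1), lamv i ^ (k - l) * v i l) * (lam - lamv i)
          ≤ W i * lam ^ (k+1) := by
        calc (∑ l ∈ Finset.range (k + 1), lamv i ^ (k - l) * v i l) * (lam - lamv i)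
            ≤ (W i * ∑ l ∈ Finset.range (k+1), lam ^ l * lamv i ^ (k - l)) * (lam - lamv i) :=
              mul_le_mul_of_nonneg_right hsum hd.le
          _ = W i * ((∑ l ∈ Finset.range (k+1), lam ^ l * lamv i ^ (k - l)) * (lam - lamv i)) := by
              ring
          _ = W i * (lam ^ (k+1) - lamv i ^ (k+1)) := by rw [hgeom]
          _ ≤ W i * lam ^ (k+1) := by
              have := pow_pos (hlamv i).1 (k+1)
              nlinarith [hW i]
      have : R i / (lam - lamv i) * W i * lam ^ (k+1)
          = R i * (W i * lam ^ (k+1)) / (lam - lamv i) := by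
        field_simp
      rw [this, le_div_iff₀ hd]
      calc R i * (∑ l ∈ Finset.range (k + 1), lamv i ^ (k - l) * v i l) * (lam - lamv i)
          = R i * ((∑ l ∈ Finset.range (k + 1), lamv i ^ (k - l) * v i l) * (lam - lamv i)) := by
            ring
        _ ≤ R i * (W i * lam ^ (k+1)) := mul_le_mul_of_nonneg_left hS (hR i)
    have t2' : ∑ i : Fin m, R i * ∑ l ∈ Finset.range (k + 1), lamv i ^ (k - l) * v i l ≤
        (∑ i : Fin m, R i / (lam - lamv i) * W i) * lam ^ (k+1) := by
      rw [Finset.sum_mul]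
      exact Finset.sum_le_sum fun i _ => t2 i
    have hu0 : 0 ≤ u 0 * lam ^ (k+1) := mul_nonneg (hu 0) hpow.le
    calc R0 * lam0 ^ k + ∑ i : Fin m, R i * ∑ l ∈ Finset.range (k + 1), lamv i ^ (k - l) * v i l
        ≤ R0 / lam * lam ^ (k+1) + (∑ i : Fin m, R i / (lam - lamv i) * W i) * lam ^ (k+1) :=
          add_le_add t1 t2'
      _ ≤ (u 0 + R0 / lam + ∑ i : Fin m, R i / (lam - lamv i) * W i) * lam ^ (k+1) := by
          nlinarith
end

section
/- (Generalized small gain theorem) Let {u_i^k}, i = 1,...,m, be nonnegative sequences, T an entrywise-nonnegative m×m real matrix with spectral radius ρ(T) < 1, β ∈ ℝ^m, and λ ∈ (0,1), such that for every N ∈ ℕ the vector u^{λ,N} := (|u_1|^{λ,N}, ..., |u_m|^{λ,N}) satisfies u^{λ,N} ≤ T u^{λ,N} + β entrywise. Then each |u_i|^λ := sup_{k≥0} u_i^k / λ^k is finite; in particular each u_i^k = O(λ^k). -/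
open Filter Matrix

attribute [local instance] Matrix.linftyOpNormedAddCommGroup Matrix.linftyOpNormedRing
  Matrix.linftyOpNormedAlgebra

theorem le_wnorm (w : ℕ → ℝ) (lam : ℝ) {k N : ℕ} (hk : k ≤ N) :
    w k / lam ^ k ≤ wnorm w lam N :=
  Finset.le_sup' (fun k => w k / lam ^ k) (Finset.mem_range_succ_iff.2 hk)

theorem wnorm_nonneg {w : ℕ → ℝ} (hw : ∀ k, 0 ≤ w k) (lam : ℝ) (N : ℕ) :
    0 ≤ wnorm w lam N :=
  calc 0 ≤ w 0 / lam ^ 0 := by simpa using hw 0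
    _ ≤ wnorm w lam N := le_wnorm w lam (Nat.zero_le N)

theorem exists_norm_pow_lt_one_of_spectralRadius_lt_one {A : Type*} [NormedRing A]
    [NormedAlgebra ℂ A] [CompleteSpace A] {a : A} (ha : spectralRadius ℂ a < 1) :
    ∃ n, ‖a ^ n‖ < 1 := by
  obtain ⟨n, hn, hlt⟩ := ((eventually_gt_atTop 0).and
    ((spectrum.pow_nnnorm_pow_one_div_tendsto_nhds_spectralRadius a).eventually_lt_const
      ha)).exists
  refine ⟨n, ?_⟩
  rw [one_div, ENNReal.rpow_inv_lt_iff (by positivity), ENNReal.one_rpow] at hlt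
  exact_mod_cast hlt

theorem Pi.norm_le_norm_of_nonneg_of_le {ι : Type*} [Fintype ι] {x y : ι → ℝ} (hx : 0 ≤ x)
    (hxy : x ≤ y) : ‖x‖ ≤ ‖y‖ :=
  (pi_norm_le_iff_of_nonneg (norm_nonneg y)).2 fun i => by
    rw [Real.norm_of_nonneg (hx i)]
    exact (hxy i).trans ((le_abs_self (y i)).trans (norm_le_pi_norm y i))

namespace Matrix

variable {n α : Type*} [Fintype n]

theorem linfty_opNorm_map_ofReal (A : Matrix n n ℝ) :
    ‖A.map (fun x : ℝ => (x : ℂ))‖ = ‖A‖ := by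
  simp [linfty_opNorm_def]

theorem exists_linfty_opNorm_pow_lt_one [DecidableEq n] [Nonempty n] (T : Matrix n n ℝ)
    (hT : ∀ μ ∈ spectrum ℂ (T.map (fun x : ℝ => (x : ℂ))), ‖μ‖ < 1) :
    ∃ p, ‖T ^ p‖ < 1 := by
  have hρ : spectralRadius ℂ (T.map (fun x : ℝ => (x : ℂ))) < 1 := by
    exact_mod_cast spectrum.spectralRadius_lt_of_forall_lt _ (r := 1) fun μ hμ => by
      exact_mod_cast hT μ hμ
  obtain ⟨p, hp⟩ := exists_norm_pow_lt_one_of_spectralRadius_lt_one hρ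
  have hpow : (T ^ p).map (fun x : ℝ => (x : ℂ)) = (T.map fun x : ℝ => (x : ℂ)) ^ p :=
    map_pow Complex.ofRealHom.mapMatrix T p
  exact ⟨p, by rwa [← linfty_opNorm_map_ofReal, hpow]⟩

theorem mulVec_mono_of_nonneg [Semiring α] [PartialOrder α] [IsOrderedRing α] {T : Matrix n n α}
    (hT : ∀ i j, 0 ≤ T i j) {x y : n → α} (hxy : x ≤ y) :
    T *ᵥ x ≤ T *ᵥ y :=
  fun i => Finset.sum_le_sum fun j _ => mul_le_mul_of_nonneg_left (hxy j) (hT i j)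

theorem le_pow_mulVec_add_of_le_mulVec_add [DecidableEq n] [Semiring α] [PartialOrder α]
    [IsOrderedRing α] {T : Matrix n n α} (hT : ∀ i j, 0 ≤ T i j) {x b : n → α}
    (h : x ≤ T *ᵥ x + b) (p : ℕ) :
    x ≤ T ^ p *ᵥ x + (∑ q ∈ Finset.range p, T ^ q) *ᵥ b := by
  induction p with
  | zero => simp
  | succ p ih =>
    have hstep := mulVec_mono_of_nonneg (pow_apply_nonneg hT p) h
    rw [mulVec_add, mulVec_mulVec, ← pow_succ] at hstep
    rw [Finset.sum_range_succ, add_mulVec]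
    calc x ≤ T ^ p *ᵥ x + (∑ q ∈ Finset.range p, T ^ q) *ᵥ b := ih
      _ ≤ T ^ (p + 1) *ᵥ x + T ^ p *ᵥ b + (∑ q ∈ Finset.range p, T ^ q) *ᵥ b := by gcongr
      _ = _ := by abel

theorem norm_le_div_of_le_mulVec_add {A : Matrix n n ℝ} (hA : ‖A‖ < 1) {x b : n → ℝ}
    (hx : 0 ≤ x) (h : x ≤ A *ᵥ x + b) : ‖x‖ ≤ ‖b‖ / (1 - ‖A‖) := by
  have hx_le : ‖x‖ ≤ ‖A‖ * ‖x‖ + ‖b‖ :=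
    calc ‖x‖ ≤ ‖A *ᵥ x + b‖ := Pi.norm_le_norm_of_nonneg_of_le hx h
      _ ≤ ‖A *ᵥ x‖ + ‖b‖ := norm_add_le _ _
      _ ≤ ‖A‖ * ‖x‖ + ‖b‖ := by gcongr; exact linfty_opNorm_mulVec A x
  rw [le_div_iff₀ (sub_pos.2 hA)]
  linarith

theorem norm_le_div_of_le_mulVec_add_of_norm_pow_lt_one [DecidableEq n] {T : Matrix n n ℝ}
    (hT : ∀ i j, 0 ≤ T i j) {p : ℕ} (hp : ‖T ^ p‖ < 1) {x b : n → ℝ} (hx : 0 ≤ x)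
    (h : x ≤ T *ᵥ x + b) :
    ‖x‖ ≤ ‖(∑ q ∈ Finset.range p, T ^ q) *ᵥ b‖ / (1 - ‖T ^ p‖) :=
  norm_le_div_of_le_mulVec_add hp hx (le_pow_mulVec_add_of_le_mulVec_add hT h p)

end Matrix

theorem generalized_small_gain_general (m : ℕ) (u : Fin m → ℕ → ℝ)
    (hu : ∀ i k, 0 ≤ u i k)
    (T : Matrix (Fin m) (Fin m) ℝ) (hT : ∀ i j, 0 ≤ T i j)
    (hspec : ∀ μ ∈ spectrum ℂ (T.map (fun x => (x : ℂ))), ‖μ‖ < 1)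
    (beta : Fin m → ℝ) (lam : ℝ)
    (hineq : ∀ N : ℕ, ∀ i : Fin m,
      wnorm (u i) lam N ≤ (∑ j : Fin m, T i j * wnorm (u j) lam N) + beta i) :
    ∀ i : Fin m, BddAbove (Set.range fun k : ℕ => u i k / lam ^ k) := by
  intro i
  have : Nonempty (Fin m) := ⟨i⟩
  obtain ⟨p, hp⟩ := T.exists_linfty_opNorm_pow_lt_one hspec
  let x : ℕ → Fin m → ℝ := fun N j => wnorm (u j) lam N
  have hx : ∀ N, 0 ≤ x N := fun N j => wnorm_nonneg (hu j) lam N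
  refine ⟨‖(∑ q ∈ Finset.range p, T ^ q) *ᵥ beta‖ / (1 - ‖T ^ p‖), ?_⟩
  rintro _ ⟨k, rfl⟩
  calc u i k / lam ^ k ≤ x k i := le_wnorm (u i) lam le_rfl
    _ ≤ ‖x k‖ := (le_abs_self _).trans (norm_le_pi_norm (x k) i)
    _ ≤ _ := norm_le_div_of_le_mulVec_add_of_norm_pow_lt_one hT hp (hx k) (hineq k)

/-- Generalized small gain theorem. -/
theorem generalized_small_gain (m : ℕ) (u : Fin m → ℕ → ℝ)
    (hu : ∀ i k, 0 ≤ u i k)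
    (T : Matrix (Fin m) (Fin m) ℝ) (hT : ∀ i j, 0 ≤ T i j)
    (hspec : ∀ μ ∈ spectrum ℂ (T.map (fun x => (x : ℂ))), ‖μ‖ < 1)
    (beta : Fin m → ℝ) (lam : ℝ) (hlam : 0 < lam ∧ lam < 1)
    (hineq : ∀ N : ℕ, ∀ i : Fin m,
      wnorm (u i) lam N ≤ (∑ j : Fin m, T i j * wnorm (u j) lam N) + beta i) :
    ∀ i : Fin m, BddAbove (Set.range fun k : ℕ => u i k / lam ^ k) :=
  generalized_small_gain_general m u hu T hT hspec beta lam hineq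
end

section
/- Let {u^k} and {v^k} be nonnegative sequences, λ ∈ (0,1), R ≥ 0, with u^{k+1} ≤ R λ^k + Σ_{l=0}^k λ^{k-l} v^l for all k ≥ 0. Then for every k ≥ 1, Σ_{l=0}^k (u^l)^2 ≤ (u^0)^2 + 2R^2/(1-λ^2) + (2/(1-λ)^2) Σ_{l=0}^k (v^l)^2. -/
/-!
Squaring the recursion with `(a + b)² ≤ 2a² + 2b²` splits `u (k+1)²` into a geometric term
`2R²λ²ᵏ`, summing to at most `2R²/(1 - λ²)`, and the square of the convolution of `v` with
`λⁿ`. Cauchy–Schwarz with the weights `λⁿ`, of total mass at most `1/(1 - λ)`, bounds that square by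
`1/(1 - λ)` times the convolution of `v²` with `λⁿ`; summing over `k` and exchanging the two sums
costs another factor `1/(1 - λ)`.
-/

open Finset

section GeometricConvolution

variable {K : Type*} [Field K] [LinearOrder K] [IsStrictOrderedRing K] {x : K}

def geomConv (x : K) (w : ℕ → K) (j : ℕ) : K :=
  ∑ l ∈ range (j + 1), x ^ (j - l) * w l

lemma sum_range_pow_le_inv_one_sub (hx0 : 0 ≤ x) (hx1 : x < 1) (n : ℕ) :
    ∑ i ∈ range n, x ^ i ≤ (1 - x)⁻¹ := by
  have := geom_sum_Ico_le_of_lt_one (m := 0) (n := n) hx0 hx1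
  rwa [← range_eq_Ico, pow_zero, one_div] at this

lemma sum_range_pow_sub_le_inv_one_sub (hx0 : 0 ≤ x) (hx1 : x < 1) (j : ℕ) :
    ∑ l ∈ range (j + 1), x ^ (j - l) ≤ (1 - x)⁻¹ := by
  have := sum_range_reflect (fun l => x ^ l) (j + 1)
  simp only [Nat.add_sub_cancel] at this
  exact this ▸ sum_range_pow_le_inv_one_sub hx0 hx1 _

lemma sq_geomConv_le (hx0 : 0 ≤ x) (hx1 : x < 1) (w : ℕ → K) (j : ℕ) :
    geomConv x w j ^ 2 ≤ (1 - x)⁻¹ * geomConv x (fun l => w l ^ 2) j := by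
  have hcs := sum_sq_le_sum_mul_sum_of_sq_le_mul (range (j + 1))
    (r := fun l => x ^ (j - l) * w l) (f := fun l => x ^ (j - l))
    (g := fun l => x ^ (j - l) * w l ^ 2)
    (fun _ _ => pow_nonneg hx0 _) (fun _ _ => by positivity) (fun _ _ => (by ring : _ = _).le)
  refine hcs.trans (mul_le_mul_of_nonneg_right (sum_range_pow_sub_le_inv_one_sub hx0 hx1 j) ?_)
  exact sum_nonneg fun _ _ => by positivity

/-- Young's inequality `‖w ∗ xⁿ‖₁ ≤ ‖xⁿ‖₁ ‖w‖₁`, truncated to the first `k` terms. -/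
lemma sum_geomConv_le (hx0 : 0 ≤ x) (hx1 : x < 1) {w : ℕ → K} (hw : ∀ l, 0 ≤ w l) (k : ℕ) :
    ∑ j ∈ range k, geomConv x w j ≤ (1 - x)⁻¹ * ∑ l ∈ range k, w l := by
  have hswap : ∑ j ∈ range k, geomConv x w j =
      ∑ l ∈ range k, (∑ i ∈ range (k - l), x ^ i) * w l := by
    simp only [geomConv, range_eq_Ico]
    rw [← sum_Ico_Ico_comm 0 k (fun l j => x ^ (j - l) * w l)]
    refine sum_congr rfl fun l _ => ?_
    rw [sum_Ico_eq_sum_range, ← range_eq_Ico, sum_mul]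
    exact sum_congr rfl fun i _ => by rw [Nat.add_sub_cancel_left]
  rw [hswap, mul_sum]
  exact sum_le_sum fun l _ =>
    mul_le_mul_of_nonneg_right (sum_range_pow_le_inv_one_sub hx0 hx1 _) (hw l)

lemma sq_le_of_le_mul_pow_add_geomConv (hx0 : 0 ≤ x) (hx1 : x < 1) {a R : K} {w : ℕ → K}
    {j : ℕ} (ha : 0 ≤ a) (h : a ≤ R * x ^ j + geomConv x w j) :
    a ^ 2 ≤ 2 * R ^ 2 * (x ^ 2) ^ j + 2 * (1 - x)⁻¹ * geomConv x (fun l => w l ^ 2) j :=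
  calc a ^ 2 ≤ (R * x ^ j + geomConv x w j) ^ 2 := pow_le_pow_left₀ ha h 2
    _ ≤ 2 * ((R * x ^ j) ^ 2 + geomConv x w j ^ 2) := add_sq_le
    _ ≤ 2 * ((R * x ^ j) ^ 2 + (1 - x)⁻¹ * geomConv x (fun l => w l ^ 2) j) := by
      gcongr; exact sq_geomConv_le hx0 hx1 w j
    _ = _ := by ring

end GeometricConvolution

theorem sum_sq_of_geometric_convolution_general (u v : ℕ → ℝ)
    (hu : ∀ k, 0 ≤ u k)
    (lam : ℝ) (hlam : 0 < lam ∧ lam < 1) (R : ℝ)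
    (hrec : ∀ k : ℕ, u (k + 1) ≤ R * lam ^ k + ∑ l ∈ Finset.range (k + 1), lam ^ (k - l) * v l) :
    ∀ k : ℕ, 1 ≤ k →
      ∑ l ∈ Finset.range (k + 1), (u l) ^ 2 ≤
        (u 0) ^ 2 + 2 * R ^ 2 / (1 - lam ^ 2) +
          (2 / (1 - lam) ^ 2) * ∑ l ∈ Finset.range (k + 1), (v l) ^ 2 := by
  obtain ⟨hlam0, hlam1⟩ := hlam
  have hlam_sq : lam ^ 2 < 1 := pow_lt_one₀ hlam0.le hlam1 two_ne_zero
  intro k _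
  have hv_sq : ∑ l ∈ range k, v l ^ 2 ≤ ∑ l ∈ range (k + 1), v l ^ 2 :=
    sum_le_sum_of_subset_of_nonneg (range_subset_range.2 k.le_succ) fun _ _ _ => sq_nonneg _
  calc ∑ l ∈ range (k + 1), u l ^ 2 = u 0 ^ 2 + ∑ j ∈ range k, u (j + 1) ^ 2 := by
        rw [sum_range_succ', add_comm]
    _ ≤ u 0 ^ 2 + ∑ j ∈ range k, (2 * R ^ 2 * (lam ^ 2) ^ j +
          2 * (1 - lam)⁻¹ * geomConv lam (fun l => v l ^ 2) j) := by
        gcongr with j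
        exact sq_le_of_le_mul_pow_add_geomConv hlam0.le hlam1 (hu (j + 1)) (hrec j)
    _ = u 0 ^ 2 + 2 * R ^ 2 * ∑ j ∈ range k, (lam ^ 2) ^ j +
          2 * (1 - lam)⁻¹ * ∑ j ∈ range k, geomConv lam (fun l => v l ^ 2) j := by
        rw [sum_add_distrib, mul_sum, mul_sum, add_assoc]
    _ ≤ u 0 ^ 2 + 2 * R ^ 2 * (1 - lam ^ 2)⁻¹ +
          2 * (1 - lam)⁻¹ * ((1 - lam)⁻¹ * ∑ l ∈ range (k + 1), v l ^ 2) := by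
        gcongr
        · exact sum_range_pow_le_inv_one_sub (sq_nonneg lam) hlam_sq k
        · exact (sum_geomConv_le hlam0.le hlam1 (fun l => sq_nonneg (v l)) k).trans
            (by gcongr)
    _ = _ := by simp only [div_eq_mul_inv, ← inv_pow]; ring

theorem sum_sq_of_geometric_convolution (u v : ℕ → ℝ)
    (hu : ∀ k, 0 ≤ u k) (hv : ∀ k, 0 ≤ v k)
    (lam : ℝ) (hlam : 0 < lam ∧ lam < 1) (R : ℝ) (hR : 0 ≤ R)
    (hrec : ∀ k : ℕ, u (k + 1) ≤ R * lam ^ k + ∑ l ∈ Finset.range (k + 1), lam ^ (k - l) * v l) :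
    ∀ k : ℕ, 1 ≤ k →
      ∑ l ∈ Finset.range (k + 1), (u l) ^ 2 ≤
        (u 0) ^ 2 + 2 * R ^ 2 / (1 - lam ^ 2) +
          (2 / (1 - lam) ^ 2) * ∑ l ∈ Finset.range (k + 1), (v l) ^ 2 :=
  sum_sq_of_geometric_convolution_general u v hu lam hlam R hrec
end

section
/- Let {i^k}_{k∈ℕ} be a sequence in {1,...,I} such that every agent appears at least once in every window of T consecutive indices (i.e., ∪_{t=k}^{k+T-1} {i^t} = {1,...,I} for all k), and let {α^t}_{t∈ℕ} be a positive sequence with α^t → 0 and Σ_t α^t = ∞. Define γ^k = α^{n_k}, where n_k = |{t ≤ k : i^t = i^k}| − 1 is the number of prior activations of agent i^k. Then γ^k → 0 and Σ_k γ^k = ∞. -/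
open Filter

/-- the global step-size sequence induced by uncoordinated local
diminishing step-sizes is itself diminishing and nonsummable. -/
theorem induced_global_stepsize (I T : ℕ) (hI : 0 < I) (hT : 0 < T)
    (idx : ℕ → Fin I)
    (hwin : ∀ k : ℕ, ∀ i : Fin I, ∃ t, k ≤ t ∧ t < k + T ∧ idx t = i)
    (alpha : ℕ → ℝ) (halpha_pos : ∀ t, 0 < alpha t)
    (halpha_to_zero : Tendsto alpha atTop (nhds 0))
    (halpha_nonsum : Tendsto (fun n => ∑ t ∈ Finset.range n, alpha t) atTop atTop)
    (gamma : ℕ → ℝ)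
    (hgamma : ∀ k, gamma k =
      alpha (((Finset.range k).filter (fun t => idx t = idx k)).card)) :
    Tendsto gamma atTop (nhds 0) ∧
      Tendsto (fun n => ∑ k ∈ Finset.range n, gamma k) atTop atTop := by
  set c : Fin I → ℕ → ℕ :=
    fun i n => ((Finset.range n).filter (fun t => idx t = i)).card with hc
  have hgrow : ∀ j : ℕ, ∀ i : Fin I, ∀ k, j * T ≤ k → j ≤ c i k := by
    intro j
    induction j with
    | zero => intro i k _; exact Nat.zero_le _
    | succ j ih =>
      intro i k hk
      obtain ⟨t, ht1, ht2, ht3⟩ := hwin (j * T) i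
      have htk : t < k := by
        have : t < (j + 1) * T := by nlinarith
        omega
      have htn : t ∉ (Finset.range (j * T)).filter (fun s => idx s = i) := by
        simp [Finset.mem_range]
        omega
      have hins : insert t ((Finset.range (j * T)).filter (fun s => idx s = i)) ⊆
          (Finset.range k).filter (fun s => idx s = i) := by
        intro x hx
        simp only [Finset.mem_insert, Finset.mem_filter, Finset.mem_range] at hx ⊢
        rcases hx with rfl | ⟨hx1, hx2⟩
        · exact ⟨htk, ht3⟩
        · constructor
          · have : j * T ≤ k := by nlinarith
            omega
          · exact hx2
      have hcard := Finset.card_le_card hins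
      rw [Finset.card_insert_of_notMem htn] at hcard
      have := ih i (j * T) le_rfl
      simp only [hc] at *
      omega
  have htends : ∀ i, Tendsto (c i) atTop atTop := by
    intro i
    refine tendsto_atTop_atTop.2 fun b => ⟨b * T, fun n hn => hgrow b i n hn⟩
  constructor
  · have h1 : Tendsto (fun k => c (idx k) k) atTop atTop :=
      tendsto_atTop_atTop.2 fun b => ⟨b * T, fun k hk => hgrow b (idx k) k hk⟩
    exact (halpha_to_zero.comp h1).congr (fun k => (hgamma k).symm)
  · set i0 : Fin I := ⟨0, hI⟩
    have hsum : ∀ n, ∑ k ∈ (Finset.range n).filter (fun t => idx t = i0),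
        alpha (c i0 k) = ∑ j ∈ Finset.range (c i0 n), alpha j := by
      intro n
      induction n with
      | zero => simp [hc]
      | succ n ih =>
        rw [Finset.range_add_one, Finset.filter_insert]
        by_cases h : idx n = i0
        · rw [if_pos h]
          have hn : n ∉ (Finset.range n).filter (fun t => idx t = i0) := by simp
          rw [Finset.sum_insert hn, ih]
          have hcn : c i0 (n + 1) = c i0 n + 1 := by
            simp only [hc]
            rw [Finset.range_add_one, Finset.filter_insert, if_pos h,
              Finset.card_insert_of_notMem (by simp)]
          rw [hcn, Finset.sum_range_succ]
          ring
        · rw [if_neg h, ih]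
          have hcn : c i0 (n + 1) = c i0 n := by
            simp only [hc]
            rw [Finset.range_add_one, Finset.filter_insert, if_neg h]
          rw [hcn]
    have hlow : ∀ n, ∑ j ∈ Finset.range (c i0 n), alpha j ≤
        ∑ k ∈ Finset.range n, gamma k := by
      intro n
      rw [← hsum n]
      have heq : ∑ k ∈ (Finset.range n).filter (fun t => idx t = i0), alpha (c i0 k)
          = ∑ k ∈ (Finset.range n).filter (fun t => idx t = i0), gamma k := by
        refine Finset.sum_congr rfl fun k hk => ?_
        simp only [Finset.mem_filter] at hk
        rw [hgamma k, hk.2]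
      rw [heq]
      refine Finset.sum_le_sum_of_subset_of_nonneg (Finset.filter_subset _ _)
        fun k _ _ => ?_
      rw [hgamma k]
      exact (halpha_pos _).le
    exact tendsto_atTop_mono hlow (halpha_nonsum.comp (htends i0))
end

section
/- Consider the linear recursion h^{k+1} = W^k (h^k + δ^k e_{i^k}) in ℝ^n, where each W^k is row stochastic, and suppose there exist stochastic vectors {ψ^k} and constants C₂ > 0, ρ ∈ (0,1) with ‖W^{k:t} − 1 (ψ^t)^T‖ ≤ C₂ ρ^{k−t} for all k ≥ t. Define y^0 = (ψ^0)^T h^0 and y^{k+1} = y^k + ψ^k_{i^k} δ^k. Then for all k ≥ 0, ‖h^{k+1} − 1 y^{k+1}‖ ≤ C₂ ρ^k ‖h^0 − 1 y^0‖ + C₂ Σ_{l=0}^k ρ^{k−l} |δ^l|. -/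
/-!
The consensus error `e k = h k - 1 y k` obeys `e (k+1) = W k e k + (W k - 1 ψₖᵀ) δₖ e_{iₖ}`,
because a row-stochastic matrix fixes constant vectors; here `1 ψᵀ` is `replicateRow ι ψ`.
Unrolling, with `W k * 1 ψₗᵀ = 1 ψₗᵀ`, gives
`e (k+1) = (W^{k:0} - 1 ψ₀ᵀ) e 0 + ∑ₗ (W^{k:l} - 1 ψₗᵀ) δₗ e_{iₗ}`, where the correction
`1 ψ₀ᵀ e 0` vanishes since `y 0 = ψ₀ᵀ h 0`. The triangle inequality and the geometric bound on
each `W^{k:l} - 1 ψₗᵀ` conclude.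
-/

open scoped Matrix.Norms.L2Operator
open Matrix Finset

section RowStochastic

variable {m ι R : Type*} [Fintype ι]

theorem Matrix.mulVec_const_of_sum_row_eq_one [NonAssocSemiring R] {A : Matrix m ι R}
    (hA : ∀ i, ∑ j, A i j = 1) (c : R) :
    A *ᵥ Function.const ι c = Function.const m c := by
  funext i
  simp [mulVec, dotProduct, ← sum_mul, hA]

theorem Matrix.mul_replicateRow_of_sum_row_eq_one {n : Type*} [NonAssocSemiring R]
    {A : Matrix m ι R} (hA : ∀ i, ∑ j, A i j = 1) (v : n → R) :
    A * replicateRow ι v = replicateRow m v := by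
  ext i j
  simp [mul_apply, ← sum_mul, hA]

theorem Matrix.replicateRow_mulVec_sub_const_dotProduct [CommRing R] {ψ : ι → R}
    (hψ : ∑ i, ψ i = 1) (v : ι → R) :
    replicateRow m ψ *ᵥ (v - Function.const ι (ψ ⬝ᵥ v)) = 0 := by
  funext i
  simp [replicateRow_mulVec_eq_const, dotProduct, mul_sub, sum_sub_distrib, ← sum_mul, hψ]

theorem Matrix.mulVec_add_sub_const_add_dotProduct [Ring R] {W : Matrix ι ι R}
    (hW : ∀ i, ∑ j, W i j = 1) (ψ v u : ι → R) (c : R) :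
    W *ᵥ (v + u) - Function.const ι (c + ψ ⬝ᵥ u) =
      W *ᵥ (v - Function.const ι c) + (W - replicateRow ι ψ) *ᵥ u := by
  rw [mulVec_add, mulVec_sub, sub_mulVec, mulVec_const_of_sum_row_eq_one hW,
    replicateRow_mulVec_eq_const, ← Function.const_add]
  abel

end RowStochastic

section Unrolling

variable {ι R : Type*} [Fintype ι] [Ring R] {W : ℕ → Matrix ι ι R} {P : ℕ → ℕ → Matrix ι ι R}
  {ψ : ℕ → ι → R}

theorem succ_eq_mulVec_add_sum_of_succ_eq (hW : ∀ k i, ∑ j, W k i j = 1)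
    (hP0 : ∀ t, P t t = W t) (hPs : ∀ k t, t ≤ k → P (k + 1) t = W (k + 1) * P k t)
    {e u : ℕ → ι → R}
    (he : ∀ k, e (k + 1) = W k *ᵥ e k + (W k - replicateRow ι (ψ k)) *ᵥ u k) (k : ℕ) :
    e (k + 1) = P k 0 *ᵥ e 0 +
      ∑ l ∈ range (k + 1), (P k l - replicateRow ι (ψ l)) *ᵥ u l := by
  induction k with
  | zero => simp [he, hP0]
  | succ k ih =>
    have hstep : ∀ t ≤ k, W (k + 1) * (P k t - replicateRow ι (ψ t)) =
        P (k + 1) t - replicateRow ι (ψ t) := fun t ht => by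
      rw [mul_sub, mul_replicateRow_of_sum_row_eq_one (hW _), hPs k t ht]
    rw [he, ih, mulVec_add, mulVec_mulVec, ← hPs k 0 k.zero_le, mulVec_sum,
      sum_range_succ _ (k + 1), hP0, add_assoc]
    congr 2
    refine sum_congr rfl fun l hl => ?_
    rw [mulVec_mulVec, hstep l (Nat.lt_succ_iff.mp (mem_range.mp hl))]

end Unrolling

section EuclideanNorm

variable {ι : Type*} [Fintype ι]

theorem sqrt_sum_sq_eq_norm_toLp (v : ι → ℝ) : √(∑ i, v i ^ 2) = ‖WithLp.toLp 2 v‖ := by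
  simp [EuclideanSpace.norm_eq]

variable [DecidableEq ι]

theorem norm_toLp_smul_single_one (i : ι) (d : ℝ) :
    ‖WithLp.toLp 2 (d • Pi.single i 1 : ι → ℝ)‖ = |d| := by
  simp [norm_smul, PiLp.norm_single]

theorem norm_toLp_mulVec_add_sum_le {α : Type*} (A : Matrix ι ι ℝ) (v : ι → ℝ) (s : Finset α)
    (B : α → Matrix ι ι ℝ) (u : α → ι → ℝ) :
    ‖WithLp.toLp 2 (A *ᵥ v + ∑ l ∈ s, B l *ᵥ u l)‖ ≤
      ‖A‖ * ‖WithLp.toLp 2 v‖ + ∑ l ∈ s, ‖B l‖ * ‖WithLp.toLp 2 (u l)‖ := by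
  rw [WithLp.toLp_add, WithLp.toLp_sum]
  refine (norm_add_le _ _).trans (add_le_add (A.l2_opNorm_mulVec _) ?_)
  exact (norm_sum_le _ _).trans (sum_le_sum fun l _ => (B l).l2_opNorm_mulVec _)

end EuclideanNorm

theorem perturbed_consensus_error_general (n : ℕ)
    (W : ℕ → Matrix (Fin n) (Fin n) ℝ)
    (hWrow : ∀ k i, ∑ j : Fin n, W k i j = 1)
    -- ordered products `P k t = W k * W (k-1) * ⋯ * W t`
    (P : ℕ → ℕ → Matrix (Fin n) (Fin n) ℝ)
    (hP0 : ∀ t, P t t = W t)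
    (hPs : ∀ k t, t ≤ k → P (k + 1) t = W (k + 1) * P k t)
    (psi : ℕ → Fin n → ℝ)
    (hpsisum : ∀ k, ∑ i : Fin n, psi k i = 1)
    (C2 rho : ℝ)
    (hgeom : ∀ k t, t ≤ k →
      ‖P k t - Matrix.of fun _ j => psi t j‖ ≤ C2 * rho ^ (k - t))
    (h : ℕ → Fin n → ℝ) (delta : ℕ → ℝ) (idx : ℕ → Fin n)
    (hrec : ∀ k, h (k + 1) = (W k).mulVec (h k + delta k • (Pi.single (idx k) 1 : Fin n → ℝ)))
    (y : ℕ → ℝ)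
    (hy0 : y 0 = ∑ i : Fin n, psi 0 i * h 0 i)
    (hy : ∀ k, y (k + 1) = y k + psi k (idx k) * delta k) :
    ∀ k : ℕ,
      Real.sqrt (∑ i : Fin n, (h (k + 1) i - y (k + 1)) ^ 2) ≤
        C2 * rho ^ k * Real.sqrt (∑ i : Fin n, (h 0 i - y 0) ^ 2) +
          C2 * ∑ l ∈ Finset.range (k + 1), rho ^ (k - l) * |delta l| := by
  set u : ℕ → Fin n → ℝ := fun k => delta k • Pi.single (idx k) 1
  set e : ℕ → Fin n → ℝ := fun k => h k - Function.const _ (y k)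
  have he : ∀ k, e (k + 1) = W k *ᵥ e k + (W k - replicateRow (Fin n) (psi k)) *ᵥ u k := by
    intro k
    have hyu : psi k (idx k) * delta k = psi k ⬝ᵥ u k := by simp [u, mul_comm]
    dsimp only [e]
    rw [hrec, hy, hyu]
    exact mulVec_add_sub_const_add_dotProduct (hWrow k) _ _ _ _
  have he0 : replicateRow (Fin n) (psi 0) *ᵥ e 0 = 0 := by
    simp only [e, hy0]
    exact replicateRow_mulVec_sub_const_dotProduct (hpsisum 0) (h 0)
  have hJ : ∀ k t, t ≤ k → ‖P k t - replicateRow (Fin n) (psi t)‖ ≤ C2 * rho ^ (k - t) := hgeom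
  intro k
  calc √(∑ i, (h (k + 1) i - y (k + 1)) ^ 2) = ‖WithLp.toLp 2 (e (k + 1))‖ :=
        sqrt_sum_sq_eq_norm_toLp _
    _ = ‖WithLp.toLp 2 ((P k 0 - replicateRow (Fin n) (psi 0)) *ᵥ e 0 +
          ∑ l ∈ range (k + 1), (P k l - replicateRow (Fin n) (psi l)) *ᵥ u l)‖ := by
        rw [succ_eq_mulVec_add_sum_of_succ_eq hWrow hP0 hPs he, sub_mulVec, he0, sub_zero]
    _ ≤ C2 * rho ^ k * ‖WithLp.toLp 2 (e 0)‖ +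
          ∑ l ∈ range (k + 1), C2 * rho ^ (k - l) * |delta l| := by
        refine (norm_toLp_mulVec_add_sum_le _ _ _ _ _).trans (add_le_add ?_ (sum_le_sum ?_))
        · gcongr
          simpa using hJ k 0 k.zero_le
        · intro l hl
          rw [norm_toLp_smul_single_one]
          gcongr
          exact hJ k l (Nat.lt_succ_iff.mp (mem_range.mp hl))
    _ = _ := by rw [← sqrt_sum_sq_eq_norm_toLp, mul_sum]; simp only [mul_assoc]; rfl

/-- consensus-error bound for the perturbed asynchronous
consensus recursion `h^{k+1} = W^k (h^k + δ^k e_{i^k})`. -/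
theorem perturbed_consensus_error (n : ℕ) (hn : 0 < n)
    (W : ℕ → Matrix (Fin n) (Fin n) ℝ)
    (hWnn : ∀ k i j, 0 ≤ W k i j) (hWrow : ∀ k i, ∑ j : Fin n, W k i j = 1)
    -- ordered products `P k t = W k * W (k-1) * ⋯ * W t`
    (P : ℕ → ℕ → Matrix (Fin n) (Fin n) ℝ)
    (hP0 : ∀ t, P t t = W t)
    (hPs : ∀ k t, t ≤ k → P (k + 1) t = W (k + 1) * P k t)
    (psi : ℕ → Fin n → ℝ)
    (hpsinn : ∀ k i, 0 ≤ psi k i) (hpsisum : ∀ k, ∑ i : Fin n, psi k i = 1)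
    (C2 rho : ℝ) (hC2 : 0 < C2) (hrho : 0 < rho ∧ rho < 1)
    (hgeom : ∀ k t, t ≤ k →
      ‖P k t - Matrix.of fun _ j => psi t j‖ ≤ C2 * rho ^ (k - t))
    (h : ℕ → Fin n → ℝ) (delta : ℕ → ℝ) (idx : ℕ → Fin n)
    (hrec : ∀ k, h (k + 1) = (W k).mulVec (h k + delta k • (Pi.single (idx k) 1 : Fin n → ℝ)))
    (y : ℕ → ℝ)
    (hy0 : y 0 = ∑ i : Fin n, psi 0 i * h 0 i)
    (hy : ∀ k, y (k + 1) = y k + psi k (idx k) * delta k) :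
    ∀ k : ℕ,
      Real.sqrt (∑ i : Fin n, (h (k + 1) i - y (k + 1)) ^ 2) ≤
        C2 * rho ^ k * Real.sqrt (∑ i : Fin n, (h 0 i - y 0) ^ 2) +
          C2 * ∑ l ∈ Finset.range (k + 1), rho ^ (k - l) * |delta l| :=
  perturbed_consensus_error_general n W hWrow P hP0 hPs psi hpsisum C2 rho hgeom h delta idx hrec y
    hy0 hy
end
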